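/- arXiv:2006.14024 — 2 statements merged into one kernel-verified Lean document; each statement's English description precedes it below -/
import Mathlib

section
/- Let 𝔇̃(ω) = (-ω² + 2iγω + Ω_R²)^{-1} be the 2×2 retarded propagator with γ > 0 and Ω_R² having diagonal ω_R² + λ₂ and off-diagonal -λ₂. Then for n ≠ ν the pointwise identity ω·Im[𝔇̃(ω)_{nn}] + 2γω²·|𝔇̃(ω)_{nn}|² + λ₂·ω·Im[𝔇̃(ω)_{nn}·𝔇̃(ω)_{νn}*] = 0 holds for all real ω. -/
/-- The matrix -ω² I + 2iγω I + Ω_R², where Ω_R² has diagonal ω_R² + λ₂ and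
off-diagonal -λ₂ (λ₂ written `lam`). -/
noncomputable def invProp (γ ωR lam ω : ℝ) : Matrix (Fin 2) (Fin 2) ℂ :=
  !![((-ω ^ 2 + ωR ^ 2 + lam : ℝ) : ℂ) + 2 * γ * ω * Complex.I, ((-lam : ℝ) : ℂ);
     ((-lam : ℝ) : ℂ), ((-ω ^ 2 + ωR ^ 2 + lam : ℝ) : ℂ) + 2 * γ * ω * Complex.I]

/-!
With `A = ω_R² + λ₂ - ω² + 2iγω` the propagator is `(A² - λ₂²)⁻¹ [[A, λ₂], [λ₂, A]]`, so
`𝔇̃_{nn} = A / d` and `𝔇̃_{νn} = λ₂ / d` with `d = A² - λ₂²`, and `2γω = Im A`. After division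
by `ω` and multiplication by `|d|²` the identity becomes
`Im (A d*) + Im A · |A|² + λ₂² · Im A = 0`, which holds because `A (A*)² = |A|² A*`.
-/

open ComplexConjugate

theorem Matrix.inv_fin_two_of {K : Type*} [Field K] (a b c d : K) :
    (!![a, b; c, d])⁻¹ = (a * d - b * c)⁻¹ • !![d, -b; -c, a] := by
  rw [Matrix.inv_def, Matrix.det_fin_two_of, Matrix.adjugate_fin_two_of, Ring.inverse_eq_inv']

namespace Complex

theorem im_mul_conj_sq_sub_sq (A : ℂ) (l : ℝ) :
    (A * conj (A ^ 2 - l ^ 2)).im = -A.im * (normSq A + l ^ 2) := by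
  simp only [map_sub, mul_im, sub_re, sub_im, pow_two, mul_re, conj_re, conj_im, ofReal_re,
    ofReal_im, normSq_apply]
  ring

theorem im_div_sq_sub_sq_add_im_mul_sq_norm_add_im_mul_conj (A : ℂ) (l : ℝ) :
    (A / (A ^ 2 - l ^ 2)).im + A.im * ‖A / (A ^ 2 - l ^ 2)‖ ^ 2
      + l * (A / (A ^ 2 - l ^ 2) * conj (l / (A ^ 2 - l ^ 2))).im = 0 := by
  set d := A ^ 2 - (l : ℂ) ^ 2
  have h_im : (A / d).im = (A * conj d).im / normSq d := by
    rw [div_eq_mul_inv, inv_def, ← mul_assoc, im_mul_ofReal, div_eq_mul_inv]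
  have h_norm : ‖A / d‖ ^ 2 = normSq A / normSq d := by
    rw [Complex.sq_norm, normSq_div]
  have h_cross : (A / d * conj (l / d)).im = l * A.im / normSq d := by
    rw [map_div₀, conj_ofReal, div_mul_div_comm, mul_conj, mul_comm A, div_ofReal_im,
      im_ofReal_mul]
  rw [h_im, h_norm, h_cross, im_mul_conj_sq_sub_sq]
  ring

end Complex

theorem propagator_identity_diag_general (γ ωR lam : ℝ) (ω : ℝ) (n ν : Fin 2) (hnν : n ≠ ν) :
    ω * ((invProp γ ωR lam ω)⁻¹ n n).im +
        2 * γ * ω ^ 2 * ‖(invProp γ ωR lam ω)⁻¹ n n‖ ^ 2 +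
        lam * ω *
          ((invProp γ ωR lam ω)⁻¹ n n * (starRingEnd ℂ) ((invProp γ ωR lam ω)⁻¹ ν n)).im
      = 0 := by
  set A : ℂ := ((-ω ^ 2 + ωR ^ 2 + lam : ℝ) : ℂ) + 2 * γ * ω * Complex.I
  have h_inv : (invProp γ ωR lam ω)⁻¹ = (A ^ 2 - lam ^ 2)⁻¹ • !![A, (lam : ℂ); (lam : ℂ), A] := by
    have h_mat : invProp γ ωR lam ω = !![A, ((-lam : ℝ) : ℂ); ((-lam : ℝ) : ℂ), A] := rfl
    rw [h_mat, Matrix.inv_fin_two_of]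
    simp only [Complex.ofReal_neg, neg_neg, ← sq, neg_sq]
  have h_diag : (invProp γ ωR lam ω)⁻¹ n n = A / (A ^ 2 - lam ^ 2) := by
    fin_cases n <;> simp [h_inv, div_eq_inv_mul]
  have h_off : (invProp γ ωR lam ω)⁻¹ ν n = lam / (A ^ 2 - lam ^ 2) := by
    fin_cases n <;> fin_cases ν <;> simp_all [div_eq_inv_mul]
  have h_im : A.im = 2 * γ * ω := by simp [A, -Complex.ofReal_pow]
  rw [h_diag, h_off]
  linear_combination ω * Complex.im_div_sq_sub_sq_add_im_mul_sq_norm_add_im_mul_conj A lam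
    - ω * ‖A / (A ^ 2 - lam ^ 2)‖ ^ 2 * h_im

/-- Pointwise identity for the two-oscillator retarded propagator 𝔇̃(ω):
ω·Im 𝔇̃_{nn} + 2γω²·|𝔇̃_{nn}|² + λ₂·ω·Im(𝔇̃_{nn}·𝔇̃_{νn}*) = 0 for all real ω,
with n ≠ ν in {1,2}. -/
theorem propagator_identity_diag (γ ωR lam : ℝ)
    (hγ : 0 < γ) (hωR : 0 < ωR) (hlam : 0 ≤ lam) (ω : ℝ)
    (hinv : IsUnit (invProp γ ωR lam ω)) (n ν : Fin 2) (hnν : n ≠ ν) :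
    ω * ((invProp γ ωR lam ω)⁻¹ n n).im +
        2 * γ * ω ^ 2 * ‖(invProp γ ωR lam ω)⁻¹ n n‖ ^ 2 +
        lam * ω *
          ((invProp γ ωR lam ω)⁻¹ n n * (starRingEnd ℂ) ((invProp γ ωR lam ω)⁻¹ ν n)).im
      = 0 :=
  propagator_identity_diag_general γ ωR lam ω n ν hnν
end

section
/- With 𝔇̃(ω) as in the two-oscillator model (γ > 0, quadratic coupling λ₂), for n ≠ ν the identity 2γω²·|𝔇̃(ω)_{nν}|² + λ₂·ω·Im[𝔇̃(ω)_{nν}·𝔇̃(ω)_{νν}*] = 0 holds pointwise for all real ω. -/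
/-! By the adjugate formula the off-diagonal entry of 𝔇̃ is `det⁻¹ λ₂` and the diagonal one is
`det⁻¹ a` with `Im a = 2γω`, so `Im(𝔇̃_{nν} 𝔇̃_{νν}*) = -2γω λ₂ |det|⁻²` and the two terms cancel. -/

namespace Matrix

variable {K : Type*} [Field K] (A : Matrix (Fin 2) (Fin 2) K) {i j : Fin 2}

theorem inv_apply_of_ne_fin_two (h : i ≠ j) : A⁻¹ i j = -(A.det⁻¹ * A i j) := by
  rw [inv_def, Ring.inverse_eq_inv', adjugate_fin_two]
  fin_cases i <;> fin_cases j <;> simp_all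

theorem inv_apply_self_fin_two (h : i ≠ j) : A⁻¹ j j = A.det⁻¹ * A i i := by
  rw [inv_def, Ring.inverse_eq_inv', adjugate_fin_two]
  fin_cases i <;> fin_cases j <;> simp_all

end Matrix

theorem Complex.im_mul_ofReal_mul_conj_mul (z a : ℂ) (c : ℝ) :
    (z * c * (starRingEnd ℂ) (z * a)).im = -(c * ‖z‖ ^ 2 * a.im) := by
  rw [map_mul, mul_mul_mul_comm, Complex.mul_conj', ← Complex.ofReal_pow,
    Complex.im_ofReal_mul, Complex.im_ofReal_mul, Complex.conj_im]
  ring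

section

variable (γ ωR lam ω : ℝ) {n ν : Fin 2}

theorem invProp_apply_of_ne (h : n ≠ ν) : invProp γ ωR lam ω n ν = ((-lam : ℝ) : ℂ) := by
  fin_cases n <;> fin_cases ν <;> simp_all [invProp]

theorem invProp_apply_self_im (n : Fin 2) : (invProp γ ωR lam ω n n).im = 2 * γ * ω := by
  fin_cases n <;> simp [invProp, -Complex.ofReal_pow]

end

theorem propagator_identity_offdiag_general (γ ωR lam : ℝ) (ω : ℝ)
    (n ν : Fin 2) (hnν : n ≠ ν) :
    2 * γ * ω ^ 2 * ‖(invProp γ ωR lam ω)⁻¹ n ν‖ ^ 2 +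
        lam * ω *
          ((invProp γ ωR lam ω)⁻¹ n ν * (starRingEnd ℂ) ((invProp γ ωR lam ω)⁻¹ ν ν)).im
      = 0 := by
  set z := (invProp γ ωR lam ω).det⁻¹
  have hoff : (invProp γ ωR lam ω)⁻¹ n ν = z * lam := by
    rw [Matrix.inv_apply_of_ne_fin_two _ hnν, invProp_apply_of_ne _ _ _ _ hnν]
    push_cast
    ring
  rw [hoff, Matrix.inv_apply_self_fin_two _ hnν, Complex.im_mul_ofReal_mul_conj_mul,
    invProp_apply_self_im, norm_mul, Complex.norm_real, Real.norm_eq_abs, mul_pow, sq_abs]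
  ring

/-- Pointwise identity for the two-oscillator retarded propagator 𝔇̃(ω):
2γω²·|𝔇̃_{nν}|² + λ₂·ω·Im(𝔇̃_{nν}·𝔇̃_{νν}*) = 0 for all real ω, n ≠ ν in {1,2}. -/
theorem propagator_identity_offdiag (γ ωR lam : ℝ)
    (hγ : 0 < γ) (hωR : 0 < ωR) (hlam : 0 ≤ lam) (ω : ℝ)
    (hinv : IsUnit (invProp γ ωR lam ω)) (n ν : Fin 2) (hnν : n ≠ ν) :
    2 * γ * ω ^ 2 * ‖(invProp γ ωR lam ω)⁻¹ n ν‖ ^ 2 +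
        lam * ω *
          ((invProp γ ωR lam ω)⁻¹ n ν * (starRingEnd ℂ) ((invProp γ ωR lam ω)⁻¹ ν ν)).im
      = 0 :=
  propagator_identity_offdiag_general γ ωR lam ω n ν hnν
end
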